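/- arXiv:2210.05873 — 3 statements merged into one kernel-verified Lean document; each statement's English description precedes it below -/
import Mathlib

section
/- From pointwise to uniform convergence in probability for monotone random functions (Polya-type lemma used in the proof of Lemma 2). For each n let F_n be a random function from [0, infinity) to [0,1] that is nonincreasing almost surely, and let G : [0, infinity) -> [0,1] be a deterministic continuous nonincreasing function with lim_{t -> infinity} G(t) = 0. If F_n(t) -> G(t) in probability for every t >= 0, then sup_{t >= 0} | F_n(t) - G(t) | -> 0 in probability. -/
/-! A nonincreasing function is pinned down everywhere by its values on a finite grid: between two
grid points `p ≤ t ≤ q` it is squeezed between its values at `q` and `p`, and beyond the last grid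
point `T` it lies between `0` and its value at `T`. If the grid is fine enough for the uniformly
continuous `G` on `[0, T]` and `G T` is small, closeness to `G` at the grid points therefore forces
uniform closeness on `[0, ∞)`. The bad event for the supremum is thus, up to a null set, contained
in a finite union of bad events at grid points, each of vanishing probability. -/

open MeasureTheory Filter Set Topology

theorem exists_finset_bracketing {a b δ : ℝ} (hab : a ≤ b) (hδ : 0 < δ) :
    ∃ P : Finset ℝ, ↑P ⊆ Icc a b ∧
      ∀ t ∈ Icc a b, ∃ p ∈ P, ∃ q ∈ P, p ≤ t ∧ t ≤ q ∧ q - p ≤ δ := by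
  set grid : ℕ → ℝ := fun i => min b (a + i * δ)
  refine ⟨(Finset.range (⌈(b - a) / δ⌉₊ + 2)).image grid, ?_, ?_⟩
  · simp only [Finset.coe_image, image_subset_iff]
    intro i _
    exact ⟨le_min hab (le_add_of_nonneg_right (by positivity)), min_le_left _ _⟩
  · rintro t ⟨hat, htb⟩
    set i := ⌊(t - a) / δ⌋₊
    have hi_le : i * δ ≤ t - a := (le_div_iff₀ hδ).mp (Nat.floor_le (by positivity))
    have hi_lt : t - a < (i + 1) * δ := (div_lt_iff₀ hδ).mp (Nat.lt_floor_add_one _)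
    have hiN : i ≤ ⌈(b - a) / δ⌉₊ :=
      Nat.floor_le_ceil _ |>.trans' (Nat.floor_mono (by gcongr))
    refine ⟨grid i, Finset.mem_image_of_mem _ (Finset.mem_range.mpr (by omega)),
      grid (i + 1), Finset.mem_image_of_mem _ (Finset.mem_range.mpr (by omega)), ?_, ?_, ?_⟩
    · exact min_le_of_right_le (by linarith)
    · exact le_min htb (by push_cast; linarith)
    · have hgrid_i : grid i = a + i * δ := min_eq_right (by linarith)
      have hgrid_succ : grid (i + 1) ≤ a + (i + 1) * δ := by
        simp only [grid]; push_cast; exact min_le_right _ _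
      linarith

theorem AntitoneOn.le_of_tendsto_atTop {G : ℝ → ℝ} {a l t : ℝ} (hG : AntitoneOn G (Ici a))
    (hlim : Tendsto G atTop (𝓝 l)) (ht : a ≤ t) : l ≤ G t :=
  le_of_tendsto hlim <| (eventually_ge_atTop t).mono fun _ hts =>
    hG ht (ht.trans hts) hts

theorem exists_finset_abs_sub_le_of_antitoneOn {G : ℝ → ℝ} (hGcont : ContinuousOn G (Ici 0))
    (hGmono : AntitoneOn G (Ici 0)) (hGlim : Tendsto G atTop (𝓝 0)) {η : ℝ} (hη : 0 < η) :
    ∃ P : Finset ℝ, (P : Set ℝ) ⊆ Ici 0 ∧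
      ∀ f : ℝ → ℝ, AntitoneOn f (Ici 0) → (∀ t, 0 ≤ t → 0 ≤ f t) →
        (∀ p ∈ P, |f p - G p| ≤ η) → ∀ t, 0 ≤ t → |f t - G t| ≤ 2 * η := by
  obtain ⟨T, hGT, hT⟩ :=
    ((hGlim.eventually (ge_mem_nhds hη)).and (eventually_ge_atTop 0)).exists
  have hGunif : UniformContinuousOn G (Icc 0 T) :=
    isCompact_Icc.uniformContinuousOn_of_continuous (hGcont.mono Icc_subset_Ici_self)
  obtain ⟨δ, hδ, hGδ⟩ := Metric.uniformContinuousOn_iff_le.mp hGunif η hη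
  obtain ⟨P, hPsub, hbracket⟩ := exists_finset_bracketing hT hδ
  refine ⟨insert T P, ?_, fun f hf hf0 hfP t ht => ?_⟩
  · simp only [Finset.coe_insert, insert_subset_iff]
    exact ⟨hT, hPsub.trans Icc_subset_Ici_self⟩
  have hG0 := hGmono.le_of_tendsto_atTop hGlim ht
  rw [abs_le]
  rcases le_total T t with hTt | htT
  · have hfT := abs_le.mp (hfP T (Finset.mem_insert_self _ _))
    have hft : f t ≤ f T := hf hT ht hTt
    have hGt : G t ≤ G T := hGmono hT ht hTt
    constructor <;> linarith [hf0 t ht]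
  · obtain ⟨p, hp, q, hq, hpt, htq, hqp⟩ := hbracket t ⟨ht, htT⟩
    have hfp := abs_le.mp (hfP p (Finset.mem_insert_of_mem hp))
    have hfq := abs_le.mp (hfP q (Finset.mem_insert_of_mem hq))
    have hdist : ∀ s ∈ P, |s - t| ≤ δ → |G s - G t| ≤ η := fun s hs =>
      hGδ s (hPsub hs) t ⟨ht, htT⟩
    have hGp := abs_le.mp (hdist p hp (by rw [abs_le]; constructor <;> linarith))
    have hGq := abs_le.mp (hdist q hq (by rw [abs_le]; constructor <;> linarith))
    have hfpt : f t ≤ f p := hf (hPsub hp).1 ht hpt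
    have hftq : f q ≤ f t := hf ht (hPsub hq).1 htq
    constructor <;> linarith

theorem tendsto_measure_biUnion_finset {ι α : Type*} {Ω : α → Type*}
    [∀ n, MeasurableSpace (Ω n)] {μ : ∀ n, Measure (Ω n)} {l : Filter α} (P : Finset ι)
    {S : ι → ∀ n, Set (Ω n)} (hS : ∀ i ∈ P, Tendsto (fun n => μ n (S i n)) l (𝓝 0)) :
    Tendsto (fun n => μ n (⋃ i ∈ P, S i n)) l (𝓝 0) := by
  have hsum : Tendsto (fun n => ∑ i ∈ P, μ n (S i n)) l (𝓝 0) := by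
    simpa using tendsto_finsetSum P hS
  exact tendsto_of_tendsto_of_tendsto_of_le_of_le tendsto_const_nhds hsum
    (fun _ => zero_le) (fun n => measure_biUnion_finset_le P _)

theorem stmt_7_general
    {Ω : ℕ → Type*} [∀ n, MeasurableSpace (Ω n)] (μ : ∀ n, Measure (Ω n))
    (F : ∀ n, Ω n → ℝ → ℝ)
    (hmono : ∀ n, ∀ᵐ ω ∂ μ n, ∀ s t : ℝ, 0 ≤ s → s ≤ t → F n ω t ≤ F n ω s)
    (hrange : ∀ n, ∀ᵐ ω ∂ μ n, ∀ t : ℝ, 0 ≤ t → F n ω t ∈ Set.Icc (0:ℝ) 1)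
    (G : ℝ → ℝ)
    (hGcont : ContinuousOn G (Set.Ici 0))
    (hGmono : AntitoneOn G (Set.Ici 0))
    (hGlim : Tendsto G atTop (nhds 0))
    (hpt : ∀ t : ℝ, 0 ≤ t → ∀ ε > (0:ℝ),
      Tendsto (fun n => μ n {ω | ε < |F n ω t - G t|}) atTop (nhds 0)) :
    ∀ ε > (0:ℝ),
      Tendsto (fun n => μ n {ω | ε < ⨆ t : Set.Ici (0:ℝ), |F n ω t - G t|})
        atTop (nhds 0) := by
  intro ε hε
  obtain ⟨P, hP0, hP⟩ := exists_finset_abs_sub_le_of_antitoneOn hGcont hGmono hGlim (half_pos hε)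
  refine tendsto_of_tendsto_of_tendsto_of_le_of_le tendsto_const_nhds
    (tendsto_measure_biUnion_finset P fun p hp => hpt p (hP0 hp) _ (half_pos hε))
    (fun _ => zero_le) (fun n => measure_mono_ae ?_)
  filter_upwards [hmono n, hrange n] with ω hmω hrω hω
  obtain ⟨⟨t, ht⟩, hεt⟩ := exists_lt_of_lt_ciSup hω
  by_contra hbad
  have hgrid : ∀ p ∈ P, |F n ω p - G p| ≤ ε / 2 := fun p hp =>
    not_lt.mp fun hp' => hbad (mem_biUnion hp hp')
  have hclose := hP (F n ω) (fun s hs t ht hst => hmω s t hs hst) (fun t ht => (hrω t ht).1)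
    hgrid t ht
  linarith

/-- **From pointwise to uniform convergence in probability for monotone random functions**
(Pólya-type lemma).  For each `n` let `Fₙ` be a random function on `[0,∞)` with values in
`[0,1]` that is nonincreasing almost surely, and let `G : [0,∞) → [0,1]` be a deterministic
continuous nonincreasing function with `G(t) → 0` as `t → ∞`.  If `Fₙ(t) → G(t)` in
probability for every `t ≥ 0`, then `sup_{t ≥ 0} |Fₙ(t) - G(t)| → 0` in probability. -/
theorem stmt_7
    {Ω : ℕ → Type*} [∀ n, MeasurableSpace (Ω n)] (μ : ∀ n, Measure (Ω n))
    [∀ n, IsProbabilityMeasure (μ n)]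
    (F : ∀ n, Ω n → ℝ → ℝ)
    (hmono : ∀ n, ∀ᵐ ω ∂ μ n, ∀ s t : ℝ, 0 ≤ s → s ≤ t → F n ω t ≤ F n ω s)
    (hrange : ∀ n, ∀ᵐ ω ∂ μ n, ∀ t : ℝ, 0 ≤ t → F n ω t ∈ Set.Icc (0:ℝ) 1)
    (G : ℝ → ℝ)
    (hGcont : ContinuousOn G (Set.Ici 0))
    (hGmono : AntitoneOn G (Set.Ici 0))
    (hGrange : ∀ t : ℝ, 0 ≤ t → G t ∈ Set.Icc (0:ℝ) 1)
    (hGlim : Tendsto G atTop (nhds 0))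
    (hpt : ∀ t : ℝ, 0 ≤ t → ∀ ε > (0:ℝ),
      Tendsto (fun n => μ n {ω | ε < |F n ω t - G t|}) atTop (nhds 0)) :
    ∀ ε > (0:ℝ),
      Tendsto (fun n => μ n {ω | ε < ⨆ t : Set.Ici (0:ℝ), |F n ω t - G t|})
        atTop (nhds 0) :=
  stmt_7_general μ F hmono hrange G hGcont hGmono hGlim hpt
end

section
/- Slice-covariance lower bound under the inverse regression model (claim proved in Remark 2). Suppose the covariate is generated as x = mu + Gamma * nu_y + sigma * epsilon, where mu in R^p, Gamma in R^{p x d}, nu_y is an R^d-valued measurable function of the random variable y, sigma > 0, and epsilon is an R^p-valued random vector with mean zero, finite second moments, and independent of y. Then for any measurable set P in R with p_h = P(y in P), the covariance matrix of the truncated vector x * 1(y in P) satisfies Cov( x 1(y in P), x 1(y in P) ) >= p_h * sigma^2 * Cov(epsilon, epsilon) in the Loewner (positive semidefinite) order. -/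
/-!
On the slice, `x 1(y ∈ P) = f(y) + h(y) ε` with `f = 1_P (μv + Γ ν)` and `h = σ 1_P`.
Since `ε` is centred and independent of `y`, every covariance between a function of `y` and
`h(y) εᵢ` vanishes, and `Cov(h(y) εᵢ, h(y) εⱼ) = E[h(y)²] E[εᵢ εⱼ] = p_h σ² Cov(εᵢ, εⱼ)`.
So the difference of the two matrices is the covariance matrix of `f(y)`, which is positive
semidefinite because `vᵀ Cov(f(y)) v = Var(vᵀ f(y))`.
-/

open MeasureTheory ProbabilityTheory
open scoped Classical

namespace MeasureTheory

variable {Ω β : Type*} {mΩ : MeasurableSpace Ω} {mβ : MeasurableSpace β} {μ : Measure Ω}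
  {Y : Ω → β} {P : Set β}

lemma indicator_const_comp_mul_eq (c : ℝ) (X : Ω → ℝ) :
    (fun ω => P.indicator (fun _ => c) (Y ω) * X ω) = (Y ⁻¹' P).indicator fun ω => c * X ω := by
  funext ω
  by_cases hω : Y ω ∈ P <;> simp [hω]

lemma MemLp.indicator_const_comp_mul {q : ENNReal} {X : Ω → ℝ} (hX : MemLp X q μ)
    (hY : Measurable Y) (hP : MeasurableSet P) (c : ℝ) :
    MemLp (fun ω => P.indicator (fun _ => c) (Y ω) * X ω) q μ := by
  rw [indicator_const_comp_mul_eq]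
  exact (hX.const_mul c).indicator (hY hP)

lemma integral_indicator_const_comp_sq (hY : Measurable Y) (hP : MeasurableSet P) (c : ℝ) :
    ∫ ω, P.indicator (fun _ => c) (Y ω) ^ 2 ∂μ = μ.real (Y ⁻¹' P) * c ^ 2 := by
  have hsq : (fun ω => P.indicator (fun _ => c) (Y ω) ^ 2)
      = (Y ⁻¹' P).indicator fun _ => c ^ 2 := by
    funext ω
    by_cases hω : Y ω ∈ P <;> simp [hω]
  rw [hsq, integral_indicator_const _ (hY hP), smul_eq_mul]

end MeasureTheory

namespace ProbabilityTheory

open Matrix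

variable {Ω ι : Type*} {mΩ : MeasurableSpace Ω} {μ : Measure Ω}

lemma posSemidef_covariance [Fintype ι] [IsFiniteMeasure μ] {X : ι → Ω → ℝ}
    (hX : ∀ i, MemLp (X i) 2 μ) :
    (Matrix.of fun i j => cov[X i, X j; μ]).PosSemidef := by
  refine posSemidef_iff_dotProduct_mulVec.mpr ⟨?_, fun v => ?_⟩
  · ext i j
    simp [covariance_comm]
  · have hvX : ∀ i, MemLp (fun ω => v i * X i ω) 2 μ := fun i => (hX i).const_mul (v i)
    have hsum : MemLp (fun ω => ∑ i, v i * X i ω) 2 μ := memLp_finsetSum _ fun i _ => hvX i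
    calc 0 ≤ Var[fun ω => ∑ i, v i * X i ω; μ] := variance_nonneg _ _
      _ = cov[fun ω => ∑ i, v i * X i ω, fun ω => ∑ i, v i * X i ω; μ] :=
        (covariance_self hsum.aemeasurable).symm
      _ = star v ⬝ᵥ (Matrix.of (fun i j => cov[X i, X j; μ]) *ᵥ v) := by
        rw [covariance_fun_sum_fun_sum hvX hvX]
        simp only [covariance_const_mul_left, covariance_const_mul_right, star_trivial,
          dotProduct, mulVec, of_apply, Finset.mul_sum]
        exact Finset.sum_congr rfl fun i _ => Finset.sum_congr rfl fun j _ => by ring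

section Noise

variable {β : Type*} {mβ : MeasurableSpace β} {Y : Ω → β} {ε : Ω → ι → ℝ}

lemma integral_comp_mul_noise_eq_zero (hind : IndepFun Y ε μ) (hY : AEMeasurable Y μ)
    (hε : AEMeasurable ε μ) (hmean : ∀ i, ∫ ω, ε ω i ∂μ = 0) {f : β → ℝ}
    (hf : Measurable f) (i : ι) : ∫ ω, f (Y ω) * ε ω i ∂μ = 0 := by
  have := hind.integral_fun_comp_mul_comp (g := fun v : ι → ℝ => v i) hY hε
    hf.aestronglyMeasurable (measurable_pi_apply i).aestronglyMeasurable
  simpa [hmean i] using this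

lemma covariance_comp_noise_eq_zero (hind : IndepFun Y ε μ) (hY : AEMeasurable Y μ)
    (hε : AEMeasurable ε μ) (hmean : ∀ i, ∫ ω, ε ω i ∂μ = 0) {f h : β → ℝ}
    (hf : Measurable f) (hh : Measurable h) (i : ι) :
    cov[fun ω => f (Y ω), fun ω => h (Y ω) * ε ω i; μ] = 0 := by
  rw [covariance, integral_comp_mul_noise_eq_zero hind hY hε hmean hh i]
  simp_rw [sub_zero, ← mul_assoc]
  exact integral_comp_mul_noise_eq_zero hind hY hε hmean
    ((hf.sub measurable_const).mul hh) i

lemma covariance_noise_noise (hind : IndepFun Y ε μ) (hY : AEMeasurable Y μ)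
    (hε : AEMeasurable ε μ) (hmean : ∀ i, ∫ ω, ε ω i ∂μ = 0) {h : β → ℝ}
    (hh : Measurable h) (i j : ι) :
    cov[fun ω => h (Y ω) * ε ω i, fun ω => h (Y ω) * ε ω j; μ]
      = (∫ ω, h (Y ω) ^ 2 ∂μ) * ∫ ω, ε ω i * ε ω j ∂μ := by
  rw [covariance, integral_comp_mul_noise_eq_zero hind hY hε hmean hh i,
    integral_comp_mul_noise_eq_zero hind hY hε hmean hh j]
  have := hind.integral_fun_comp_mul_comp (f := fun b => h b ^ 2)
    (g := fun v : ι → ℝ => v i * v j) hY hε (hh.pow_const 2).aestronglyMeasurable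
    ((measurable_pi_apply i).mul (measurable_pi_apply j)).aestronglyMeasurable
  rw [← this]
  congr with ω
  ring

lemma covariance_comp_add_noise [IsFiniteMeasure μ] (hind : IndepFun Y ε μ)
    (hY : AEMeasurable Y μ) (hε : AEMeasurable ε μ) (hmean : ∀ i, ∫ ω, ε ω i ∂μ = 0) {f g h : β → ℝ}
    (hf : Measurable f) (hg : Measurable g) (hh : Measurable h)
    (hfL2 : MemLp (fun ω => f (Y ω)) 2 μ) (hgL2 : MemLp (fun ω => g (Y ω)) 2 μ)
    {i j : ι} (hiL2 : MemLp (fun ω => h (Y ω) * ε ω i) 2 μ)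
    (hjL2 : MemLp (fun ω => h (Y ω) * ε ω j) 2 μ) :
    cov[fun ω => f (Y ω) + h (Y ω) * ε ω i, fun ω => g (Y ω) + h (Y ω) * ε ω j; μ]
      = cov[fun ω => f (Y ω), fun ω => g (Y ω); μ]
        + (∫ ω, h (Y ω) ^ 2 ∂μ) * ∫ ω, ε ω i * ε ω j ∂μ := by
  change cov[_ + _, _ + _; μ] = _
  rw [covariance_add_left hfL2 hiL2 (hgL2.add hjL2), covariance_add_right hfL2 hgL2 hjL2,
    covariance_add_right hiL2 hgL2 hjL2, covariance_comm (X := fun ω => h (Y ω) * ε ω i),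
    covariance_comp_noise_eq_zero hind hY hε hmean hf hh,
    covariance_comp_noise_eq_zero hind hY hε hmean hg hh,
    covariance_noise_noise hind hY hε hmean hh]
  ring

end Noise

end ProbabilityTheory

theorem stmt_9_general
    {Ω : Type*} [MeasurableSpace Ω] (μ : Measure Ω) [IsProbabilityMeasure μ]
    {p d : ℕ}
    (y : Ω → ℝ) (hy : Measurable y)
    (ν : ℝ → Fin d → ℝ) (hν : Measurable ν)
    (ε : Ω → Fin p → ℝ) (hε : Measurable ε)
    (μv : Fin p → ℝ) (Γ : Matrix (Fin p) (Fin d) ℝ) (σ : ℝ)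
    (hεmean : ∀ j, ∫ ω, ε ω j ∂μ = 0)
    (hεL2 : ∀ j, MemLp (fun ω => ε ω j) 2 μ)
    (hindep : IndepFun ε y μ)
    (x : Ω → Fin p → ℝ)
    (hx : ∀ ω j, x ω j = μv j + Γ.mulVec (ν (y ω)) j + σ * ε ω j)
    (P : Set ℝ) (hP : MeasurableSet P)
    (hxL2 : ∀ j, MemLp (fun ω => if y ω ∈ P then x ω j else 0) 2 μ)
    (ph : ℝ) (hph : ph = (μ {ω | y ω ∈ P}).toReal) :
    Matrix.PosSemidef
      ((Matrix.of fun j k =>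
          (∫ ω, (if y ω ∈ P then x ω j else 0) * (if y ω ∈ P then x ω k else 0) ∂μ)
            - (∫ ω, (if y ω ∈ P then x ω j else 0) ∂μ)
              * (∫ ω, (if y ω ∈ P then x ω k else 0) ∂μ))
        - (ph * σ ^ 2) •
          (Matrix.of fun j k =>
            (∫ ω, ε ω j * ε ω k ∂μ)
              - (∫ ω, ε ω j ∂μ) * (∫ ω, ε ω k ∂μ))) := by
  set f : Fin p → ℝ → ℝ := fun j => P.indicator fun t => μv j + Γ.mulVec (ν t) j
  set h : ℝ → ℝ := P.indicator fun _ => σ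
  have hf : ∀ j, Measurable (f j) := fun j =>
    (measurable_const.add ((measurable_pi_apply j).comp
      ((continuous_const.matrix_mulVec continuous_id).measurable.comp hν))).indicator hP
  have hh : Measurable h := measurable_const.indicator hP
  have hslice : ∀ j, (fun ω => if y ω ∈ P then x ω j else 0)
      = fun ω => f j (y ω) + h (y ω) * ε ω j := by
    intro j; funext ω
    by_cases hω : y ω ∈ P <;> simp [f, h, hω, hx]
  have hnoiseL2 : ∀ j, MemLp (fun ω => h (y ω) * ε ω j) 2 μ := fun j =>
    (hεL2 j).indicator_const_comp_mul hy hP σ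
  have hsignalL2 : ∀ j, MemLp (fun ω => f j (y ω)) 2 μ := fun j =>
    ((hxL2 j).sub (hnoiseL2 j)).ae_eq (.of_forall fun ω => by simp [congrFun (hslice j) ω])
  convert posSemidef_covariance hsignalL2 using 1
  ext j k
  replace hph : μ.real (y ⁻¹' P) = ph := hph.symm
  have hcov := covariance_eq_sub (hxL2 j) (hxL2 k)
  simp only [Pi.mul_apply] at hcov
  rw [Matrix.sub_apply, Matrix.smul_apply, Matrix.of_apply, Matrix.of_apply,
    Matrix.of_apply, ← hcov, hslice j, hslice k,
    covariance_comp_add_noise hindep.symm hy.aemeasurable hε.aemeasurable hεmean (hf j) (hf k) hh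
      (hsignalL2 j) (hsignalL2 k) (hnoiseL2 j) (hnoiseL2 k), hεmean j, hεmean k,
    integral_indicator_const_comp_sq hy hP, hph]
  simp

/-- **Slice-covariance lower bound under the inverse regression model.**
Suppose `x = μv + Γ νy(y) + σ ε` where `ε` has mean zero, finite second moments, and is
independent of `y`.  Then for any measurable slice `P ⊆ ℝ` with `p_h = P(y ∈ P)`,
`Cov(x 1(y ∈ P)) ⪰ p_h σ² Cov(ε)` in the Loewner order. -/
theorem stmt_9
    {Ω : Type*} [MeasurableSpace Ω] (μ : Measure Ω) [IsProbabilityMeasure μ]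
    {p d : ℕ}
    (y : Ω → ℝ) (hy : Measurable y)
    (ν : ℝ → Fin d → ℝ) (hν : Measurable ν)
    (ε : Ω → Fin p → ℝ) (hε : Measurable ε)
    (μv : Fin p → ℝ) (Γ : Matrix (Fin p) (Fin d) ℝ) (σ : ℝ) (hσ : 0 < σ)
    (hεmean : ∀ j, ∫ ω, ε ω j ∂μ = 0)
    (hεL2 : ∀ j, MemLp (fun ω => ε ω j) 2 μ)
    (hindep : IndepFun ε y μ)
    (x : Ω → Fin p → ℝ)
    (hx : ∀ ω j, x ω j = μv j + Γ.mulVec (ν (y ω)) j + σ * ε ω j)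
    (P : Set ℝ) (hP : MeasurableSet P)
    (hxL2 : ∀ j, MemLp (fun ω => if y ω ∈ P then x ω j else 0) 2 μ)
    (ph : ℝ) (hph : ph = (μ {ω | y ω ∈ P}).toReal) :
    Matrix.PosSemidef
      ((Matrix.of fun j k =>
          (∫ ω, (if y ω ∈ P then x ω j else 0) * (if y ω ∈ P then x ω k else 0) ∂μ)
            - (∫ ω, (if y ω ∈ P then x ω j else 0) ∂μ)
              * (∫ ω, (if y ω ∈ P then x ω k else 0) ∂μ))
        - (ph * σ ^ 2) •
          (Matrix.of fun j k =>
            (∫ ω, ε ω j * ε ω k ∂μ)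
              - (∫ ω, ε ω j ∂μ) * (∫ ω, ε ω k ∂μ))) :=
  stmt_9_general μ y hy ν hν ε hε μv Γ σ hεmean hεL2 hindep x hx P hP hxL2 ph hph
end

section
/- Population slice coefficients lie in the central subspace under the linearity condition (the identity E[f(y) phi(y)] in S_{y|x} used to justify the SIR/OLS formulation). Let x be a centered random vector in R^p with invertible covariance matrix Sigma, let B in R^{p x d} with B^T Sigma B invertible, and let y be a real random variable such that y and x are conditionally independent given B^T x. Assume the linearity condition: E[ x | B^T x ] = Sigma B (B^T Sigma B)^{-1} B^T x almost surely. Then for every bounded measurable function f : R -> R, the vector Sigma^{-1} E[ x f(y) ] lies in the column space of B. -/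
/-!
Conditional independence of `y` and `x` given `k = Bᵀx` says that the conditional law of `y`
given `(k, x)` depends on `k` alone. Consequently `E[X f(y)] = E[E[X | k] f(y)]` for every
integrable function `X` of `x`. Applied to the coordinates of `x`, the linearity condition
turns this into the fixed-point identity `v = Σ B (BᵀΣB)⁻¹ Bᵀ v` for `v = E[x f(y)]`, and
multiplying by `Σ⁻¹` exhibits `Σ⁻¹ v` as `B c`.
-/

open MeasureTheory ProbabilityTheory Matrix

theorem integral_mul_condExp_of_stronglyMeasurable_left {Ω : Type*} {m m₀ : MeasurableSpace Ω}
    {μ : Measure Ω} (hm : m ≤ m₀) [SigmaFinite (μ.trim hm)] {X h : Ω → ℝ}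
    (hX : StronglyMeasurable[m] X) (hXh : Integrable (X * h) μ) (hh : Integrable h μ) :
    ∫ ω, X ω * h ω ∂μ = ∫ ω, X ω * μ[h|m] ω ∂μ :=
  calc ∫ ω, X ω * h ω ∂μ = ∫ ω, μ[X * h|m] ω ∂μ := (integral_condExp hm).symm
    _ = ∫ ω, X ω * μ[h|m] ω ∂μ :=
      integral_congr_ae (condExp_mul_of_stronglyMeasurable_left hX hXh hh)

theorem integral_mul_condExp_of_stronglyMeasurable_right {Ω : Type*} {m m₀ : MeasurableSpace Ω}
    {μ : Measure Ω} (hm : m ≤ m₀) [SigmaFinite (μ.trim hm)] {X h : Ω → ℝ}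
    (hX : StronglyMeasurable[m] X) (hhX : Integrable (h * X) μ) (hh : Integrable h μ) :
    ∫ ω, h ω * X ω ∂μ = ∫ ω, μ[h|m] ω * X ω ∂μ :=
  calc ∫ ω, h ω * X ω ∂μ = ∫ ω, μ[h * X|m] ω ∂μ := (integral_condExp hm).symm
    _ = ∫ ω, μ[h|m] ω * X ω ∂μ :=
      integral_congr_ae (condExp_mul_of_stronglyMeasurable_right hX hhX hh)

namespace ProbabilityTheory

variable {Ω β γ δ : Type*} {mΩ : MeasurableSpace Ω} [StandardBorelSpace Ω]
  {μ : Measure Ω} [IsFiniteMeasure μ]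
  [MeasurableSpace β] [StandardBorelSpace β] [Nonempty β]
  {mγ : MeasurableSpace γ} [StandardBorelSpace γ] [Nonempty γ] {mδ : MeasurableSpace δ}
  {x : Ω → γ} {y : Ω → β} {k : Ω → δ}

theorem CondIndepFun.condExp_comp_ae_eq (hx : Measurable x) (hy : Measurable y)
    (hk : Measurable k) (hCI : y ⟂ᵢ[k, hk; μ] x) {f : β → ℝ} (hf : StronglyMeasurable f)
    (hfy : Integrable (f ∘ y) μ) :
    μ[f ∘ y | MeasurableSpace.comap (fun ω => (k ω, x ω)) inferInstance]
      =ᵐ[μ] μ[f ∘ y | mδ.comap k] := by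
  have hkernel := (condIndepFun_iff_condDistrib_prod_ae_eq_prodMkRight hy hx hk).mp hCI.symm
  filter_upwards [condExp_ae_eq_integral_condDistrib (hk.prodMk hx) hy.aemeasurable hf hfy,
    condExp_ae_eq_integral_condDistrib hk hy.aemeasurable hf hfy,
    ae_of_ae_map (hk.prodMk hx).aemeasurable hkernel] with ω hcond_kx hcond_k hω
  rw [Function.comp_def, hcond_kx, hcond_k, hω, Kernel.prodMkRight_apply]

theorem CondIndepFun.integral_mul_comp_eq_integral_condExp_mul (hx : Measurable x)
    (hy : Measurable y) (hk : Measurable k) (hCI : y ⟂ᵢ[k, hk; μ] x) {X : Ω → ℝ}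
    (hXm : StronglyMeasurable[mγ.comap x] X) (hXi : Integrable X μ)
    {f : β → ℝ} (hf : Measurable f) {C : ℝ} (hC : ∀ b, |f b| ≤ C) :
    ∫ ω, X ω * f (y ω) ∂μ
      = ∫ ω, μ[X | mδ.comap k] ω * f (y ω) ∂μ := by
  have hkx := hk.prodMk hx
  have hFm : AEStronglyMeasurable (f ∘ y) μ := (hf.comp hy).aestronglyMeasurable
  have hFb : ∀ᵐ ω ∂μ, |(f ∘ y) ω| ≤ C := .of_forall fun ω => hC _
  have hF : Integrable (f ∘ y) μ := .of_bound hFm _ hFb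
  have hcondF : ∀ᵐ ω ∂μ, |μ[f ∘ y | mδ.comap k] ω| ≤ C :=
    ae_bdd_abs_condExp_of_ae_bdd_abs hFb
  have hx_kx : Measurable[MeasurableSpace.comap (fun ω => (k ω, x ω)) inferInstance] x :=
    measurable_snd.comp (comap_measurable _)
  have hXkx : StronglyMeasurable[MeasurableSpace.comap (fun ω => (k ω, x ω)) inferInstance] X :=
    hXm.mono hx_kx.comap_le
  calc ∫ ω, X ω * f (y ω) ∂μ
      = ∫ ω, X ω *
          μ[f ∘ y | MeasurableSpace.comap (fun ω => (k ω, x ω)) inferInstance] ω ∂μ :=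
        integral_mul_condExp_of_stronglyMeasurable_left hkx.comap_le hXkx
          (hXi.mul_bdd hFm hFb) hF
    _ = ∫ ω, X ω * μ[f ∘ y | mδ.comap k] ω ∂μ := by
        refine integral_congr_ae ?_
        filter_upwards [hCI.condExp_comp_ae_eq hx hy hk hf.stronglyMeasurable hF] with ω hω
        rw [hω]
    _ = ∫ ω, μ[X | mδ.comap k] ω * μ[f ∘ y | mδ.comap k] ω ∂μ :=
        integral_mul_condExp_of_stronglyMeasurable_right hk.comap_le stronglyMeasurable_condExp
          (hXi.mul_bdd (stronglyMeasurable_condExp.mono hk.comap_le).aestronglyMeasurable hcondF)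
          hXi
    _ = ∫ ω, μ[X | mδ.comap k] ω * f (y ω) ∂μ :=
        (integral_mul_condExp_of_stronglyMeasurable_left hk.comap_le stronglyMeasurable_condExp
          (integrable_condExp.mul_bdd hFm hFb) hF).symm

end ProbabilityTheory

theorem integral_mulVec_apply_mul {Ω ι κ : Type*} [MeasurableSpace Ω] {μ : Measure Ω}
    [Fintype κ] (P : Matrix ι κ ℝ) {x : Ω → κ → ℝ} {g : Ω → ℝ}
    (hxg : ∀ i, Integrable (fun ω => x ω i * g ω) μ) (j : ι) :
    ∫ ω, (P *ᵥ x ω) j * g ω ∂μ = (P *ᵥ fun i => ∫ ω, x ω i * g ω ∂μ) j := by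
  simp only [mulVec, dotProduct, Finset.sum_mul, mul_assoc]
  rw [integral_finsetSum _ fun i _ => (hxg i).const_mul (P j i)]
  simp only [integral_const_mul]

theorem Matrix.inv_mulVec_eq_mulVec_of_mul_mulVec_eq {R n d : Type*} [CommRing R] [Fintype n]
    [DecidableEq n] [Fintype d] {S : Matrix n n R} (hS : IsUnit S.det) (B : Matrix n d R)
    (N : Matrix d n R) {v : n → R} (hv : (S * B * N) *ᵥ v = v) :
    S⁻¹ *ᵥ v = B *ᵥ N *ᵥ v := by
  conv_lhs => rw [← hv]
  rw [mulVec_mulVec, mulVec_mulVec, ← Matrix.mul_assoc, ← Matrix.mul_assoc,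
    nonsing_inv_mul S hS, Matrix.one_mul]

theorem stmt_11_general
    {Ω : Type*} [MeasurableSpace Ω] [StandardBorelSpace Ω]
    (μ : Measure Ω) [IsProbabilityMeasure μ]
    {p d : ℕ}
    (x : Ω → Fin p → ℝ) (hx : Measurable x)
    (y : Ω → ℝ) (hy : Measurable y)
    (hL2 : ∀ j, MemLp (fun ω => x ω j) 2 μ)
    (Sg : Matrix (Fin p) (Fin p) ℝ)
    (hSginv : IsUnit Sg.det)
    (B : Matrix (Fin p) (Fin d) ℝ)
    (hm : Measurable (fun ω => Bᵀ.mulVec (x ω)))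
    (hCI : CondIndepFun
        (MeasurableSpace.comap (fun ω => Bᵀ.mulVec (x ω)) inferInstance)
        hm.comap_le y x μ)
    (hlin : ∀ j,
      μ[(fun ω => x ω j) |
          MeasurableSpace.comap (fun ω => Bᵀ.mulVec (x ω)) inferInstance]
        =ᵐ[μ] fun ω => (Sg * B * (Bᵀ * Sg * B)⁻¹ * Bᵀ).mulVec (x ω) j) :
    ∀ f : ℝ → ℝ, Measurable f → (∃ Cf : ℝ, ∀ r, |f r| ≤ Cf) →
      ∃ c : Fin d → ℝ,
        Sg⁻¹.mulVec (fun j => ∫ ω, x ω j * f (y ω) ∂μ) = B.mulVec c := by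
  rintro f hf ⟨C, hC⟩
  have hx1 : ∀ j, Integrable (fun ω => x ω j) μ := fun j => (hL2 j).integrable one_le_two
  have hxf : ∀ j, Integrable (fun ω => x ω j * f (y ω)) μ := fun j =>
    (hx1 j).mul_bdd (hf.comp hy).aestronglyMeasurable (.of_forall fun ω => hC (y ω))
  have hfix :
      (Sg * B * ((Bᵀ * Sg * B)⁻¹ * Bᵀ)) *ᵥ (fun j => ∫ ω, x ω j * f (y ω) ∂μ)
        = fun j => ∫ ω, x ω j * f (y ω) ∂μ := by
    funext j
    rw [← Matrix.mul_assoc, ← integral_mulVec_apply_mul _ hxf]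
    have hxj : StronglyMeasurable[MeasurableSpace.comap x inferInstance] (fun ω => x ω j) :=
      ((measurable_pi_apply j).comp (comap_measurable x)).stronglyMeasurable
    refine ((hCI.integral_mul_comp_eq_integral_condExp_mul hx hy hm hxj (hx1 j) hf hC).trans
      (integral_congr_ae ?_)).symm
    filter_upwards [hlin j] with ω hω
    rw [hω]
  exact ⟨_, inv_mulVec_eq_mulVec_of_mul_mulVec_eq hSginv B _ hfix⟩

/-- **Population slice coefficients lie in the central subspace under the linearity
condition.**  If `x` is centered with invertible covariance `Σ`, `y ⫫ x ∣ Bᵀx`, and the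
linearity condition `E[x | Bᵀx] = Σ B (BᵀΣB)⁻¹ Bᵀ x` holds a.s., then for every bounded
measurable `f : ℝ → ℝ`, the vector `Σ⁻¹ E[x f(y)]` lies in the column space of `B`. -/
theorem stmt_11
    {Ω : Type*} [MeasurableSpace Ω] [StandardBorelSpace Ω]
    (μ : Measure Ω) [IsProbabilityMeasure μ]
    {p d : ℕ}
    (x : Ω → Fin p → ℝ) (hx : Measurable x)
    (y : Ω → ℝ) (hy : Measurable y)
    (hL2 : ∀ j, MemLp (fun ω => x ω j) 2 μ)
    (hcentered : ∀ j, ∫ ω, x ω j ∂μ = 0)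
    (Sg : Matrix (Fin p) (Fin p) ℝ)
    (hSg : ∀ j k, Sg j k = ∫ ω, x ω j * x ω k ∂μ)
    (hSginv : IsUnit Sg.det)
    (B : Matrix (Fin p) (Fin d) ℝ)
    (hBinv : IsUnit (Bᵀ * Sg * B).det)
    (hm : Measurable (fun ω => Bᵀ.mulVec (x ω)))
    (hCI : CondIndepFun
        (MeasurableSpace.comap (fun ω => Bᵀ.mulVec (x ω)) inferInstance)
        hm.comap_le y x μ)
    (hlin : ∀ j,
      μ[(fun ω => x ω j) |
          MeasurableSpace.comap (fun ω => Bᵀ.mulVec (x ω)) inferInstance]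
        =ᵐ[μ] fun ω => (Sg * B * (Bᵀ * Sg * B)⁻¹ * Bᵀ).mulVec (x ω) j) :
    ∀ f : ℝ → ℝ, Measurable f → (∃ Cf : ℝ, ∀ r, |f r| ≤ Cf) →
      ∃ c : Fin d → ℝ,
        Sg⁻¹.mulVec (fun j => ∫ ω, x ω j * f (y ω) ∂μ) = B.mulVec c :=
  stmt_11_general μ x hx y hy hL2 Sg hSginv B hm hCI hlin
end
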